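/- arXiv:2106.15311 — 4 statements merged into one kernel-verified Lean document; each statement's English description precedes it below -/
import Mathlib

section
/- In any reachable state of a set automaton, any two distinct positions occurring in match obligations are incomparable under the prefix order. -/
/-- A position is a finite list of positive natural numbers. -/
abbrev Pos : Type := List ℕ+

/-- `below p q` (written `p ≤ q` in the paper) holds iff `q` is a prefix of `p`. -/
def below (p q : Pos) : Prop := ∃ q'' : Pos, p = q ++ q''

/-- Terms over a signature `F`, with a single variable `ω` (patterns are linear). -/
inductive Tm (F : Type) : Type
  | var : Tm F
  | app : F → List (Tm F) → Tm F

variable {F : Type}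

/-- Head symbol of a term (none for the variable). -/
def hd : Tm F → Option F
  | .var => none
  | .app f _ => some f

/-- The subterm of `t` at position `p`, if `p` is in the domain of `t`. -/
def subtermAt : Tm F → Pos → Option (Tm F)
  | t, [] => some t
  | .var, _ :: _ => none
  | .app _ ts, i :: p => (ts[(i : ℕ) - 1]?).bind (fun u => subtermAt u p)

/-- The domain (set of positions) of a term. -/
def Dom (t : Tm F) : Set Pos := {p | (subtermAt t p).isSome}

/-- `t` is a closed term: it contains no variable. -/
def Closed (t : Tm F) : Prop := ∀ p u, subtermAt t p = some u → u ≠ Tm.var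

/-- Terms that respect the arity function of the signature. -/
inductive WF (ar : F → ℕ) : Tm F → Prop
  | var : WF ar Tm.var
  | app : ∀ f ts, ts.length = ar f → (∀ u ∈ ts, WF ar u) → WF ar (Tm.app f ts)

/-- Pattern `ℓ` matches term `t` at position `p`: for every non-variable
position `p'` of `ℓ`, the head symbols of `t[p.p']` and `ℓ[p']` agree. -/
def Matches (ℓ t : Tm F) (p : Pos) : Prop :=
  ∀ p' u, subtermAt ℓ p' = some u → u ≠ Tm.var →
    ∃ v, subtermAt t (p ++ p') = some v ∧ hd v = hd u

/-- A match obligation: a set of (subpattern, position) pairs. -/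
abbrev Obl (F : Type) := Set (Tm F × Pos)
/-- A match goal: a match obligation together with a match announcement. -/
abbrev Goal (F : Type) := Obl F × (Tm F × Pos)
/-- A state of the set automaton: a set of match goals. -/
abbrev St (F : Type) := Set (Goal F)

/-- The positions of a match obligation. -/
def posOf (mo : Obl F) : Set Pos := {p | ∃ u, (u, p) ∈ mo}

/-- All match obligation positions of a state. -/
def posMO (s : St F) : Set Pos := {p | ∃ g ∈ s, p ∈ posOf g.1}

/-- Reduction of a match obligation after observing a symbol of arity `n`
at position `p`: pairs at other positions are kept, and the pair at `p` is
replaced by obligations for its non-variable arguments. -/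
def reduce (mo : Obl F) (n : ℕ) (p : Pos) : Obl F :=
  {x | x ∈ mo ∧ x.2 ≠ p} ∪
  {x | ∃ (ℓ u : Tm F) (i : ℕ+), (ℓ, p) ∈ mo ∧ (i : ℕ) ≤ n ∧
        subtermAt ℓ [i] = some u ∧ u ≠ Tm.var ∧ x = (u, p ++ [i])}

/-- The `f`-derivative of state `s` labelled with position `lab`:
unchanged goals, reduced goals and fresh goals. -/
def derivS (pats : Set (Tm F)) (ar : F → ℕ) (s : St F) (lab : Pos) (f : F) : St F :=
  {g | g ∈ s ∧ lab ∉ posOf g.1} ∪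
  {g | ∃ mo ma, (mo, ma) ∈ s ∧ (∃ ℓ, (ℓ, lab) ∈ mo ∧ hd ℓ = some f) ∧
        reduce mo (ar f) lab ≠ ∅ ∧ g = (reduce mo (ar f) lab, ma)} ∪
  {g | ∃ (ℓ : Tm F) (i : ℕ+), ℓ ∈ pats ∧ (i : ℕ) ≤ ar f ∧
        g = ({(ℓ, lab ++ [i])}, (ℓ, lab ++ [i]))}

/-- The direct dependency relation: the obligation position sets intersect. -/
def dirDep (g₁ g₂ : Goal F) : Prop := (posOf g₁.1 ∩ posOf g₂.1).Nonempty

/-- `K` is an equivalence class of `X` under the transitive closure of the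
direct dependency relation restricted to `X`. -/
def IsClass (X K : St F) : Prop :=
  ∃ g ∈ X, K = {g' | g' ∈ X ∧
    Relation.ReflTransGen (fun a b => a ∈ X ∧ b ∈ X ∧ dirDep a b) g g'}

/-- The match announcement positions of a set of goals. -/
def posMA (K : St F) : Set Pos := {p | ∃ mo ℓ, (mo, (ℓ, p)) ∈ K}

/-- `g` is the greatest common prefix (join) of the set of positions `P`. -/
def IsGcp (P : Set Pos) (g : Pos) : Prop :=
  (∀ p ∈ P, below p g) ∧ ∀ r : Pos, (∀ p ∈ P, below p r) → below g r

/-- Lift a match goal by stripping the common prefix `g` from all positions. -/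
def liftGoal (g : Pos) (x : Goal F) : Goal F :=
  ((fun y : Tm F × Pos => (y.1, y.2.drop g.length)) '' x.1,
   (x.2.1, x.2.2.drop g.length))

/-- Lift a set of match goals. -/
def liftSt (g : Pos) (K : St F) : St F := liftGoal g '' K

/-- The transition function of the set automaton: `(s', p') ∈ delta pats ar L s f`
iff `s'` is the lifting of a dependency class `K` of the derivative and `p'` is
the greatest common prefix of the announcement positions of `K`. -/
def delta (pats : Set (Tm F)) (ar : F → ℕ) (L : St F → Pos) (s : St F) (f : F) :
    Set (St F × Pos) :=
  {x | ∃ K, IsClass (derivS pats ar s (L s) f) K ∧ IsGcp (posMA K) x.2 ∧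
        x.1 = liftSt x.2 K}

/-- The initial state: all fresh root goals. -/
def initSt (pats : Set (Tm F)) : St F :=
  {g | ∃ ℓ ∈ pats, g = ({(ℓ, ([] : Pos))}, (ℓ, ([] : Pos)))}

/-- Reachable states of the set automaton. -/
inductive Reachable (pats : Set (Tm F)) (ar : F → ℕ) (L : St F → Pos) : St F → Prop
  | init : Reachable pats ar L (initSt pats)
  | step : ∀ s f s' p, Reachable pats ar L s →
      (s', p) ∈ delta pats ar L s f → Reachable pats ar L s'

/-- The labelling function `L` picks, for every reachable state, an obligation
position of one of its root goals. -/
def RootLabel (pats : Set (Tm F)) (ar : F → ℕ) (L : St F → Pos) : Prop :=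
  ∀ s, Reachable pats ar L s →
    ∃ mo ℓ, (mo, (ℓ, ([] : Pos))) ∈ s ∧ L s ∈ posOf mo

/-- The nodes of the evaluation tree `ET_M(t)`. -/
inductive Node (pats : Set (Tm F)) (ar : F → ℕ) (L : St F → Pos) (t : Tm F) :
    St F → Pos → Prop
  | root : Node pats ar L t (initSt pats) []
  | step : ∀ s p f s' p', Node pats ar L t s p →
      (∃ v, subtermAt t (p ++ L s) = some v ∧ hd v = some f) →
      (s', p') ∈ delta pats ar L s f →
      Node pats ar L t s' (p ++ p')

/-- The edges of the evaluation tree `ET_M(t)`. -/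
def EdgeRel (pats : Set (Tm F)) (ar : F → ℕ) (L : St F → Pos) (t : Tm F)
    (s : St F) (p : Pos) (s' : St F) (q : Pos) : Prop :=
  Node pats ar L t s p ∧ ∃ f p',
    (∃ v, subtermAt t (p ++ L s) = some v ∧ hd v = some f) ∧
    (s', p') ∈ delta pats ar L s f ∧ q = p ++ p'

/-- The work set `W(s,p)`: the positions of `t` below the position pointer that
still have to be inspected. -/
def Work (t : Tm F) (s : St F) (p : Pos) : Set Pos :=
  {x | ∃ q, x = p ++ q ∧ x ∈ Dom t ∧ ∃ r ∈ posMO s, below q r}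

/-- The output function: match announcements whose obligation is completed by
observing `f` at the label position. -/
def outS (ar : F → ℕ) (L : St F → Pos) (s : St F) (f : F) : Set (Tm F × Pos) :=
  {ma | ({(Tm.app f (List.replicate (ar f) Tm.var), L s)}, ma) ∈ s}

namespace PosMOAux

lemma below_trans {p q r : Pos} (h1 : below p q) (h2 : below q r) : below p r := by
  obtain ⟨a, rfl⟩ := h1; obtain ⟨b, rfl⟩ := h2; exact ⟨b ++ a, by simp⟩

lemma below_cancel {g a b : Pos} : below (g ++ a) (g ++ b) ↔ below a b := by
  constructor
  · rintro ⟨c, h⟩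
    have h' : g ++ a = g ++ (b ++ c) := by simpa [List.append_assoc] using h
    exact ⟨c, List.append_cancel_left h'⟩
  · rintro ⟨c, rfl⟩; exact ⟨c, by simp⟩

lemma incomp_snoc {p lab : Pos} {i : ℕ+} (h1 : ¬ below p lab) (h2 : ¬ below lab p)
    (hne : p ≠ lab ++ [i]) : ¬ below p (lab ++ [i]) ∧ ¬ below (lab ++ [i]) p := by
  constructor
  · rintro ⟨c, rfl⟩; exact h1 ⟨[i] ++ c, by simp⟩
  · rintro ⟨c, hc⟩
    cases c with
    | nil => simp at hc; exact hne hc.symm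
    | cons x xs =>
      -- p is a proper prefix of lab ++ [i], hence a prefix of lab
      have hplen : p.length ≤ lab.length := by
        have := congrArg List.length hc
        simp at this; omega
      have hp1 : p <+: lab ++ [i] := ⟨x :: xs, hc.symm⟩
      have hp2 : lab <+: lab ++ [i] := ⟨[i], rfl⟩
      have := List.prefix_of_prefix_length_le hp1 hp2 hplen
      obtain ⟨t, ht⟩ := this
      exact h2 ⟨t, ht.symm⟩

lemma snoc_incomp {lab : Pos} {i j : ℕ+} (h : i ≠ j) :
    ¬ below (lab ++ [i]) (lab ++ [j]) := by
  rw [below_cancel]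
  rintro ⟨c, hc⟩
  simp at hc
  exact h hc.1

/-- The invariant: positions pairwise incomparable, and every obligation
position extends the goal's announcement position. -/
def Inv {F : Type} (s : St F) : Prop :=
  (∀ p ∈ posMO s, ∀ q ∈ posMO s, p ≠ q → ¬ below p q ∧ ¬ below q p) ∧
  (∀ g ∈ s, ∀ p ∈ posOf g.1, below p g.2.2)

lemma inv_reachable {F : Type} (pats : Set (Tm F)) (ar : F → ℕ) (L : St F → Pos)
    (hL : RootLabel pats ar L) :
    ∀ s, Reachable pats ar L s → Inv s := by
  intro s hs
  induction hs with
  | init =>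
    constructor
    · intro p hp q hq hne
      exfalso; apply hne
      obtain ⟨g, hg, u, hu⟩ := hp
      obtain ⟨g', hg', u', hu'⟩ := hq
      obtain ⟨ℓ, _, rfl⟩ := hg
      obtain ⟨ℓ', _, rfl⟩ := hg'
      simp only [Set.mem_singleton_iff, Prod.mk.injEq] at hu hu'
      rw [hu.2, hu'.2]
    · rintro g hg p hp
      obtain ⟨ℓ, _, rfl⟩ := hg
      obtain ⟨u, hu⟩ := hp
      simp only [Set.mem_singleton_iff, Prod.mk.injEq] at hu
      exact ⟨[], by simp [hu.2]⟩
  | step s f s' p hreach hdelta ih =>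
    obtain ⟨K, hK, hgcp', hs''⟩ := hdelta
    have hgcp : IsGcp (posMA K) p := hgcp'
    have hs' : s' = liftSt p K := hs''
    set lab := L s with hlab
    set D := derivS pats ar s lab f with hD
    -- lab is an obligation position of s
    have hlabMO : lab ∈ posMO s := by
      obtain ⟨mo, ℓ, hmem, hpos⟩ := hL s hreach
      exact ⟨(mo, (ℓ, [])), hmem, hpos⟩
    -- characterization of positions of D
    have hDpos : ∀ r ∈ posMO D, (r ∈ posMO s ∧ r ≠ lab) ∨ ∃ i : ℕ+, r = lab ++ [i] := by
      rintro r ⟨g, hg, u, hu⟩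
      rcases hg with (hg | hg) | hg
      · exact Or.inl ⟨⟨g, hg.1, u, hu⟩, fun h => hg.2 (h ▸ ⟨u, hu⟩)⟩
      · obtain ⟨mo, ma, hmo, _, _, rfl⟩ := hg
        rcases hu with hu | hu
        · exact Or.inl ⟨⟨(mo, ma), hmo, u, hu.1⟩, hu.2⟩
        · obtain ⟨ℓ, v, i, _, _, _, _, heq⟩ := hu
          simp only [Prod.mk.injEq] at heq
          exact Or.inr ⟨i, heq.2⟩
      · obtain ⟨ℓ, i, _, _, rfl⟩ := hg
        simp only [Set.mem_singleton_iff, Prod.mk.injEq] at hu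
        exact Or.inr ⟨i, hu.2⟩
    -- incomparability of positions of D
    have hDinc : ∀ r₁ ∈ posMO D, ∀ r₂ ∈ posMO D, r₁ ≠ r₂ →
        ¬ below r₁ r₂ ∧ ¬ below r₂ r₁ := by
      intro r₁ hr₁ r₂ hr₂ hne
      rcases hDpos r₁ hr₁ with ⟨h₁, hne₁⟩ | ⟨i, rfl⟩
      · rcases hDpos r₂ hr₂ with ⟨h₂, hne₂⟩ | ⟨i, rfl⟩
        · exact ih.1 r₁ h₁ r₂ h₂ hne
        · have := ih.1 r₁ h₁ lab hlabMO hne₁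
          exact incomp_snoc this.1 this.2 hne
      · rcases hDpos r₂ hr₂ with ⟨h₂, hne₂⟩ | ⟨j, rfl⟩
        · have := ih.1 r₂ h₂ lab hlabMO hne₂
          have := incomp_snoc this.1 this.2 (Ne.symm hne)
          exact ⟨this.2, this.1⟩
        · have hij : i ≠ j := by
            intro h; exact hne (by rw [h])
          exact ⟨snoc_incomp hij, snoc_incomp hij.symm⟩
    -- prefix property for D
    have hDpre : ∀ g ∈ D, ∀ r ∈ posOf g.1, below r g.2.2 := by
      rintro g hg r hr
      rcases hg with (hg | hg) | hg
      · exact ih.2 g hg.1 r hr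
      · obtain ⟨mo, ma, hmo, ⟨ℓ, hℓmo, _⟩, _, rfl⟩ := hg
        obtain ⟨u, hu⟩ := hr
        rcases hu with hu | hu
        · exact ih.2 (mo, ma) hmo r ⟨u, hu.1⟩
        · obtain ⟨ℓ', v, i, hℓ'mo, _, _, _, heq⟩ := hu
          simp only [Prod.mk.injEq] at heq
          have hlabma : below lab ma.2 := ih.2 (mo, ma) hmo lab ⟨ℓ', hℓ'mo⟩
          obtain ⟨c, hc⟩ := hlabma
          exact heq.2 ▸ ⟨c ++ [i], by simp [hc]⟩
      · obtain ⟨ℓ, i, _, _, rfl⟩ := hg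
        obtain ⟨u, hu⟩ := hr
        simp only [Set.mem_singleton_iff, Prod.mk.injEq] at hu
        exact ⟨[], by simp [hu.2]⟩
    -- K ⊆ D
    obtain ⟨g0, hg0D, hKeq⟩ := hK
    have hKsub : K ⊆ D := by rw [hKeq]; exact fun g' hg' => hg'.1
    have hKposSub : posMO K ⊆ posMO D := by
      rintro r ⟨g, hg, u, hu⟩; exact ⟨g, hKsub hg, u, hu⟩
    -- every position of K extends p
    have hKpref : ∀ r ∈ posMO K, below r p := by
      rintro r ⟨g, hgK, u, hu⟩
      have h1 : below r g.2.2 := hDpre g (hKsub hgK) r ⟨u, hu⟩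
      have hma : g.2.2 ∈ posMA K := ⟨g.1, g.2.1, by simpa using hgK⟩
      exact below_trans h1 (hgcp.1 g.2.2 hma)
    -- characterization of positions of s'
    have hlift : ∀ r, r ∈ posMO s' ↔ ∃ q ∈ posMO K, r = q.drop p.length := by
      intro r
      constructor
      · rintro ⟨g', hg', u, hu⟩
        rw [hs'] at hg'
        obtain ⟨g, hgK, rfl⟩ := hg'
        obtain ⟨⟨v, q⟩, hvq, heq⟩ := hu
        simp only [Prod.mk.injEq] at heq
        exact ⟨q, ⟨g, hgK, v, hvq⟩, heq.2.symm⟩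
      · rintro ⟨q, ⟨g, hgK, u, hu⟩, rfl⟩
        exact ⟨liftGoal p g, by rw [hs']; exact ⟨g, hgK, rfl⟩,
          u, ⟨(u, q), hu, rfl⟩⟩
    constructor
    · intro r₁ hr₁ r₂ hr₂ hne
      obtain ⟨q₁, hq₁, rfl⟩ := (hlift r₁).1 hr₁
      obtain ⟨q₂, hq₂, rfl⟩ := (hlift r₂).1 hr₂
      obtain ⟨a₁, ha₁⟩ := hKpref q₁ hq₁
      obtain ⟨a₂, ha₂⟩ := hKpref q₂ hq₂
      subst ha₁; subst ha₂
      simp only [List.drop_left] at hne ⊢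
      have hqne : p ++ a₁ ≠ p ++ a₂ := by
        intro h; exact hne (List.append_cancel_left h)
      have := hDinc _ (hKposSub hq₁) _ (hKposSub hq₂) hqne
      exact ⟨fun h => this.1 (below_cancel.2 h), fun h => this.2 (below_cancel.2 h)⟩
    · rintro g' hg' r hr
      rw [hs'] at hg'
      obtain ⟨g, hgK, rfl⟩ := hg'
      obtain ⟨u, hu⟩ := hr
      obtain ⟨⟨v, q⟩, hvq, heq⟩ := hu
      simp only [Prod.mk.injEq] at heq
      have h1 : below q g.2.2 := hDpre g (hKsub hgK) q ⟨v, hvq⟩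
      have h2 : below g.2.2 p := hgcp.1 g.2.2 ⟨g.1, g.2.1, by simpa using hgK⟩
      obtain ⟨b, hb⟩ := h2
      obtain ⟨c, hc⟩ := h1
      rw [← heq.2]
      show below (q.drop p.length) (g.2.2.drop p.length)
      rw [hc, hb]
      rw [List.append_assoc, List.drop_left, List.drop_left]
      exact ⟨c, rfl⟩

end PosMOAux

/-- In any reachable state of the set automaton, any two distinct positions
occurring in match obligations are incomparable under the prefix order. -/
theorem posMO_pairwise_incomparable {F : Type} (pats : Set (Tm F)) (ar : F → ℕ)
    (L : St F → Pos) (hpats : pats.Nonempty)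
    (hpv : ∀ ℓ ∈ pats, ℓ ≠ Tm.var) (hL : RootLabel pats ar L) :
    ∀ s, Reachable pats ar L s →
      ∀ p q, p ∈ posMO s → q ∈ posMO s → p ≠ q →
        ¬ below p q ∧ ¬ below q p := by
  intro s hs p q hp hq hne
  exact (PosMOAux.inv_reachable pats ar L hL s hs).1 p hp q hq hne
end

section
/- In every reachable state of a set automaton, for every match goal ℓ₁@p₁,…,ℓₙ@pₙ → ℓ@p, each obligation position pᵢ is below the announcement position p (p is a prefix of each pᵢ). -/
variable {F : Type}

/-! Every transition adds obligations only below existing obligation positions or as fresh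
goals whose obligation and announcement share a position, and lifting strips the same prefix
from obligation and announcement positions alike; so the property is an inductive invariant. -/

lemma below_refl (p : Pos) : below p p := ⟨[], by simp⟩

lemma below.append {q p : Pos} (h : below q p) (r : Pos) : below (q ++ r) p := by
  obtain ⟨a, rfl⟩ := h
  exact ⟨a ++ r, by simp⟩

lemma below.drop {q p g : Pos} (hqp : below q p) (hpg : below p g) :
    below (q.drop g.length) (p.drop g.length) := by
  obtain ⟨a, rfl⟩ := hqp
  obtain ⟨b, rfl⟩ := hpg
  exact ⟨a, by simp⟩

lemma IsClass.subset {X K : St F} (h : IsClass X K) : K ⊆ X := by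
  obtain ⟨_, _, rfl⟩ := h
  exact fun _ hx => hx.1

def OblBelowMA (s : St F) : Prop :=
  ∀ (mo : Obl F) (ℓ : Tm F) (p : Pos), (mo, (ℓ, p)) ∈ s → ∀ q ∈ posOf mo, below q p

namespace OblBelowMA

lemma mono {s t : St F} (h : OblBelowMA t) (hst : s ⊆ t) : OblBelowMA s :=
  fun mo ℓ p hmem => h mo ℓ p (hst hmem)

lemma initSt (pats : Set (Tm F)) : OblBelowMA (initSt pats) := by
  rintro mo ℓ p ⟨ℓ', -, heq⟩ q ⟨u, hu⟩
  simp only [Prod.mk.injEq] at heq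
  obtain ⟨rfl, -, rfl⟩ := heq
  obtain ⟨-, rfl⟩ := Prod.mk.injEq .. ▸ Set.eq_of_mem_singleton hu
  exact below_refl _

lemma derivS {s : St F} (h : OblBelowMA s) (pats : Set (Tm F)) (ar : F → ℕ) (lab : Pos)
    (f : F) : OblBelowMA (derivS pats ar s lab f) := by
  rintro mo ℓ p ((⟨hs, -⟩ | ⟨mo₀, ma, hs, -, -, heq⟩) | ⟨ℓ', i, -, -, heq⟩) q ⟨u, hu⟩
  · exact h mo ℓ p hs q ⟨u, hu⟩
  · simp only [Prod.mk.injEq] at heq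
    obtain ⟨rfl, rfl⟩ := heq
    rcases hu with ⟨hu₀, -⟩ | ⟨ℓ₀, u', i, hℓ₀, -, -, -, hx⟩
    · exact h mo₀ ℓ p hs q ⟨u, hu₀⟩
    · obtain ⟨-, rfl⟩ := Prod.mk.injEq .. ▸ hx
      exact (h mo₀ ℓ p hs lab ⟨ℓ₀, hℓ₀⟩).append [i]
  · simp only [Prod.mk.injEq] at heq
    obtain ⟨rfl, -, rfl⟩ := heq
    obtain ⟨-, rfl⟩ := Prod.mk.injEq .. ▸ Set.eq_of_mem_singleton hu
    exact below_refl _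

lemma liftSt {K : St F} (h : OblBelowMA K) {g : Pos} (hg : ∀ p ∈ posMA K, below p g) :
    OblBelowMA (liftSt g K) := by
  rintro mo ℓ p ⟨⟨mo₀, ℓ₀, p₀⟩, hK, hlift⟩ q ⟨u, hu⟩
  simp only [liftGoal, Prod.mk.injEq] at hlift
  obtain ⟨rfl, rfl, rfl⟩ := hlift
  obtain ⟨⟨u₀, q₀⟩, hq₀, hx⟩ := hu
  obtain ⟨-, rfl⟩ := Prod.mk.injEq .. ▸ hx
  exact (h mo₀ ℓ₀ p₀ hK q₀ ⟨u₀, hq₀⟩).drop (hg p₀ ⟨mo₀, ℓ₀, hK⟩)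

lemma delta {pats : Set (Tm F)} {ar : F → ℕ} {L : St F → Pos} {s s' : St F} {f : F}
    {p' : Pos} (h : OblBelowMA s) (hδ : (s', p') ∈ delta pats ar L s f) :
    OblBelowMA s' := by
  obtain ⟨K, hK, hgcp, hs' : s' = _root_.liftSt p' K⟩ := hδ
  rw [hs']
  exact ((h.derivS pats ar (L s) f).mono hK.subset).liftSt hgcp.1

end OblBelowMA

theorem oblPos_below_maPos_general {F : Type} (pats : Set (Tm F)) (ar : F → ℕ)
    (L : St F → Pos) :
    ∀ s, Reachable pats ar L s →
      ∀ (mo : Obl F) (ℓ : Tm F) (p : Pos), (mo, (ℓ, p)) ∈ s →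
        ∀ q ∈ posOf mo, below q p := by
  intro s hs
  induction hs with
  | init => exact OblBelowMA.initSt pats
  | step _ _ _ _ _ hδ ih => exact OblBelowMA.delta ih hδ

/-- In every reachable state, every obligation position of a match goal is
below (i.e. extends) the position of its match announcement. -/
theorem oblPos_below_maPos {F : Type} (pats : Set (Tm F)) (ar : F → ℕ)
    (L : St F → Pos) (hpats : pats.Nonempty)
    (hpv : ∀ ℓ ∈ pats, ℓ ≠ Tm.var) (hL : RootLabel pats ar L) :
    ∀ s, Reachable pats ar L s →
      ∀ (mo : Obl F) (ℓ : Tm F) (p : Pos), (mo, (ℓ, p)) ∈ s →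
        ∀ q ∈ posOf mo, below q p :=
  oblPos_below_maPos_general pats ar L
end

section
/- For every reachable state s of a set automaton and every function symbol f, every dependency-equivalence class K of the derivative deriv(s,f) contains a match goal whose match announcement position equals gcp(K), the greatest common prefix of the announcement positions in K. -/
variable {F : Type}

/-! Every goal of a reachable state, and hence of its derivative, has its obligation positions
below its announcement position. Take a goal `b` of a class `K` with a shortest announcement
position. Directly dependent goals share an obligation position, of which both announcement
positions are prefixes, so they are comparable; following a dependency chain from `b`,
minimality shows that `b`'s announcement position is a prefix of every announcement position
in `K`, i.e. it is `gcp(K)`. -/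

lemma below_iff_prefix {p q : Pos} : below p q ↔ q <+: p :=
  ⟨fun ⟨r, h⟩ => ⟨r, h.symm⟩, fun ⟨r, h⟩ => ⟨r, h.symm⟩⟩

lemma below_append (p r : Pos) : below (p ++ r) p := ⟨r, rfl⟩

lemma below_trans {p q r : Pos} (h₁ : below p q) (h₂ : below q r) : below p r := by
  rw [below_iff_prefix] at *
  exact h₂.trans h₁

lemma below_of_below_of_length_le {p q r : Pos} (hq : below p q) (hr : below p r)
    (hlen : r.length ≤ q.length) : below q r := by
  rw [below_iff_prefix] at *
  exact List.prefix_of_prefix_length_le hr hq hlen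

lemma IsGcp.eq_of_mem_of_forall_below {P : Set Pos} {g p : Pos} (hg : IsGcp P g) (hp : p ∈ P)
    (hup : ∀ q ∈ P, below q p) : g = p := by
  have h₁ := below_iff_prefix.1 (hg.1 p hp)
  have h₂ := below_iff_prefix.1 (hg.2 p hup)
  exact h₂.eq_of_length (h₂.length_le.antisymm h₁.length_le) |>.symm

lemma mem_posOf_reduce {mo : Obl F} {n : ℕ} {p q : Pos} (hq : q ∈ posOf (reduce mo n p)) :
    q ∈ posOf mo ∨ p ∈ posOf mo ∧ below q p := by
  obtain ⟨u, ⟨hu, -⟩ | ⟨ℓ, u', i, hℓ, -, -, -, hx⟩⟩ := hq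
  · exact .inl ⟨u, hu⟩
  · obtain ⟨-, rfl⟩ : u = u' ∧ q = p ++ [i] := by simpa [Prod.ext_iff] using hx
    exact .inr ⟨⟨ℓ, hℓ⟩, below_append p [i]⟩

def ObligationsBelowAnnouncement (s : St F) : Prop :=
  ∀ x ∈ s, ∀ p ∈ posOf x.1, below p x.2.2

namespace ObligationsBelowAnnouncement

lemma mono {s t : St F} (ht : ObligationsBelowAnnouncement t) (hst : s ⊆ t) :
    ObligationsBelowAnnouncement s :=
  fun x hx => ht x (hst hx)

lemma initSt (pats : Set (Tm F)) : ObligationsBelowAnnouncement (initSt pats) := by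
  rintro _ ⟨ℓ, -, rfl⟩ p -
  exact ⟨p, rfl⟩

lemma derivS {s : St F} (hs : ObligationsBelowAnnouncement s) (pats : Set (Tm F))
    (ar : F → ℕ) (lab : Pos) (f : F) :
    ObligationsBelowAnnouncement (derivS pats ar s lab f) := by
  rintro x ((⟨hx, -⟩ | ⟨mo, ma, hmem, -, -, rfl⟩) | ⟨ℓ, i, -, -, rfl⟩) p hp
  · exact hs x hx p hp
  · rcases mem_posOf_reduce hp with hp | ⟨hlab, hp⟩
    · exact hs _ hmem p hp
    · exact below_trans hp (hs _ hmem lab hlab)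
  · obtain ⟨u, hu⟩ := hp
    obtain ⟨-, rfl⟩ : u = ℓ ∧ p = lab ++ [i] := by simpa [Prod.ext_iff] using hu
    exact below_refl _

/-- Stripping a common prefix `g` of all announcement positions keeps obligations below
announcements, since `g` is then also a prefix of every obligation position. -/
lemma liftSt {K : St F} {g : Pos} (hK : ObligationsBelowAnnouncement K)
    (hg : ∀ p ∈ posMA K, below p g) : ObligationsBelowAnnouncement (liftSt g K) := by
  rintro _ ⟨⟨mo, ℓ, q⟩, hx, rfl⟩ _ ⟨u, ⟨⟨u', p⟩, hp, hup⟩⟩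
  obtain ⟨-, rfl⟩ : u' = u ∧ p.drop g.length = _ := by simpa [Prod.ext_iff] using hup
  obtain ⟨r, rfl⟩ := hK _ hx p ⟨u', hp⟩
  obtain ⟨t, rfl⟩ := hg q ⟨mo, ℓ, hx⟩
  refine ⟨r, ?_⟩
  simp only [liftGoal, List.append_assoc, List.drop_left]

end ObligationsBelowAnnouncement

/-- The relation whose reflexive-transitive closure defines the classes in `IsClass X`. -/
def depIn (X : St F) (a b : Goal F) : Prop := a ∈ X ∧ b ∈ X ∧ dirDep a b

instance (X : St F) : Std.Symm (depIn X) :=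
  ⟨fun _ _ ⟨ha, hb, p, hpa, hpb⟩ => ⟨hb, ha, p, hpb, hpa⟩⟩

namespace IsClass

variable {X K : St F}

lemma subset_s10 (hK : IsClass X K) : K ⊆ X := by
  obtain ⟨_, -, rfl⟩ := hK
  exact fun _ hx => hx.1

lemma reflTransGen (hK : IsClass X K) {a b : Goal F} (ha : a ∈ K) (hb : b ∈ K) :
    Relation.ReflTransGen (depIn X) a b := by
  obtain ⟨_, -, rfl⟩ := hK
  exact ((Relation.ReflTransGen.stdSymm (r := depIn X)).symm _ _ ha.2).trans hb.2

lemma mem_of_reflTransGen (hK : IsClass X K) {a b : Goal F} (ha : a ∈ K)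
    (hab : Relation.ReflTransGen (depIn X) a b) : b ∈ K := by
  obtain ⟨_, -, rfl⟩ := hK
  rcases hab.cases_tail with rfl | ⟨c, -, -, hb, -⟩
  · exact ha
  · exact ⟨hb, ha.2.trans hab⟩

lemma below_of_length_le (hX : ObligationsBelowAnnouncement X) (hK : IsClass X K)
    {b : Goal F} (hb : b ∈ K) (hmin : ∀ y ∈ K, b.2.2.length ≤ y.2.2.length) :
    ∀ y ∈ K, below y.2.2 b.2.2 := by
  intro y hy
  induction hK.reflTransGen hb hy with
  | refl => exact below_refl _
  | @tail c y hbc hcy ih =>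
    obtain ⟨hcX, hyX, q, hqc, hqy⟩ := hcy
    have hyK : y ∈ K := hK.mem_of_reflTransGen hb (hbc.tail ⟨hcX, hyX, q, hqc, hqy⟩)
    have hqb : below q b.2.2 :=
      below_trans (hX c hcX q hqc) (ih (hK.mem_of_reflTransGen hb hbc))
    exact below_of_below_of_length_le (hX y hyX q hqy) hqb (hmin y hyK)

lemma exists_mem_of_isGcp (hX : ObligationsBelowAnnouncement X) (hK : IsClass X K)
    {g : Pos} (hg : IsGcp (posMA K) g) : ∃ (mo : Obl F) (ℓ : Tm F), (mo, (ℓ, g)) ∈ K := by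
  have hne : K.Nonempty := by
    obtain ⟨a, ha, rfl⟩ := hK
    exact ⟨a, ha, .refl⟩
  set b := Function.argminOn (fun y : Goal F => y.2.2.length) K hne
  have hb : b ∈ K := Function.argminOn_mem _ K hne
  have hup : ∀ q ∈ posMA K, below q b.2.2 := by
    rintro q ⟨mo, ℓ, hq⟩
    exact hK.below_of_length_le hX hb
      (fun y hy => Function.argminOn_le (fun y : Goal F => y.2.2.length) K hy) _ hq
  rw [hg.eq_of_mem_of_forall_below ⟨b.1, b.2.1, hb⟩ hup]
  exact ⟨b.1, b.2.1, hb⟩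

end IsClass

lemma Reachable.obligationsBelowAnnouncement {pats : Set (Tm F)} {ar : F → ℕ}
    {L : St F → Pos} {s : St F} (hs : Reachable pats ar L s) :
    ObligationsBelowAnnouncement s := by
  induction hs with
  | init => exact .initSt pats
  | step s f s' p _ hδ ih =>
    obtain ⟨K, hK, hg, hs'⟩ := hδ
    rw [show s' = liftSt p K from hs']
    exact ((ih.derivS pats ar (L s) f).mono hK.subset_s10).liftSt hg.1

theorem class_has_goal_at_gcp_general {F : Type} (pats : Set (Tm F)) (ar : F → ℕ)
    (L : St F → Pos) :
    ∀ s, Reachable pats ar L s → ∀ (f : F) (K : St F) (g : Pos),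
      IsClass (derivS pats ar s (L s) f) K → IsGcp (posMA K) g →
        ∃ (mo : Obl F) (ℓ : Tm F), (mo, (ℓ, g)) ∈ K :=
  fun s hs f _ _ hK hg =>
    hK.exists_mem_of_isGcp (hs.obligationsBelowAnnouncement.derivS pats ar (L s) f) hg

/-- Every dependency-equivalence class `K` of the derivative of a reachable
state contains a match goal whose announcement position is `gcp(K)`. -/
theorem class_has_goal_at_gcp {F : Type} (pats : Set (Tm F)) (ar : F → ℕ)
    (L : St F → Pos) (hpats : pats.Nonempty)
    (hpv : ∀ ℓ ∈ pats, ℓ ≠ Tm.var) (hL : RootLabel pats ar L) :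
    ∀ s, Reachable pats ar L s → ∀ (f : F) (K : St F) (g : Pos),
      IsClass (derivS pats ar s (L s) f) K → IsGcp (posMA K) g →
        ∃ (mo : Obl F) (ℓ : Tm F), (mo, (ℓ, g)) ∈ K :=
  class_has_goal_at_gcp_general pats ar L
end

section
/- In the evaluation tree ET_M(t) of a closed term t, for every node n=(s,p), the work sets of distinct successors of n are pairwise disjoint. -/
variable {F : Type}

lemma posMO_mono {K X : St F} (h : K ⊆ X) : posMO K ⊆ posMO X :=
  fun _ ⟨g, hg, hq⟩ => ⟨g, h hg, hq⟩

lemma mem_posMO_liftSt {g r : Pos} {K : St F} :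
    r ∈ posMO (liftSt g K) ↔ ∃ o ∈ posMO K, r = o.drop g.length := by
  constructor
  · rintro ⟨-, ⟨x, hx, rfl⟩, u, y, hy, hyr⟩
    exact ⟨y.2, ⟨x, hx, y.1, hy⟩, (congrArg Prod.snd hyr).symm⟩
  · rintro ⟨o, ⟨x, hx, u, hu⟩, rfl⟩
    exact ⟨liftGoal g x, ⟨x, hx, rfl⟩, u, (u, o), hu, rfl⟩

lemma mem_posMO_derivS {pats : Set (Tm F)} {ar : F → ℕ} {s : St F} {lab q : Pos} {f : F}
    (h : q ∈ posMO (derivS pats ar s lab f)) :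
    (q ∈ posMO s ∧ q ≠ lab) ∨ ∃ i : ℕ+, q = lab ++ [i] := by
  obtain ⟨g, hg, u, hu⟩ := h
  rcases hg with (⟨hgs, hlab⟩ | ⟨mo, ma, hmem, -, -, rfl⟩) | ⟨ℓ, i, -, -, rfl⟩
  · exact .inl ⟨⟨g, hgs, u, hu⟩, fun e => hlab (e ▸ ⟨u, hu⟩)⟩
  · rcases hu with ⟨hu, hne⟩ | ⟨_, _, i, _, _, _, _, hx⟩
    · exact .inl ⟨⟨(mo, ma), hmem, u, hu⟩, hne⟩
    · exact .inr ⟨i, congrArg Prod.snd hx⟩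
  · exact .inr ⟨i, congrArg Prod.snd (Set.mem_singleton_iff.mp hu)⟩

lemma mem_delta_iff {pats : Set (Tm F)} {ar : F → ℕ} {L : St F → Pos} {s s' : St F} {f : F}
    {p' : Pos} :
    (s', p') ∈ delta pats ar L s f ↔
      ∃ K, IsClass (derivS pats ar s (L s) f) K ∧ IsGcp (posMA K) p' ∧ s' = liftSt p' K :=
  Iff.rfl

lemma IsGcp.unique {P : Set Pos} {g₁ g₂ : Pos} (h₁ : IsGcp P g₁) (h₂ : IsGcp P g₂) :
    g₁ = g₂ := by
  have h₂₁ := below_iff_prefix.mp (h₁.2 g₂ h₂.1)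
  have h₁₂ := below_iff_prefix.mp (h₂.2 g₁ h₁.1)
  exact h₁₂.eq_of_length (le_antisymm h₁₂.length_le h₂₁.length_le)

lemma IsClass.eq_of_dirDep {X K₁ K₂ : St F} (h₁ : IsClass X K₁) (h₂ : IsClass X K₂)
    {a b : Goal F} (ha : a ∈ K₁) (hb : b ∈ K₂) (hab : dirDep a b) : K₁ = K₂ := by
  obtain ⟨g₁, -, rfl⟩ := h₁
  obtain ⟨g₂, -, rfl⟩ := h₂
  set R : Goal F → Goal F → Prop := fun a b => a ∈ X ∧ b ∈ X ∧ dirDep a b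
  have : Std.Symm R := ⟨fun _ _ ⟨hx, hy, ⟨o, ho⟩⟩ => ⟨hy, hx, ⟨o, ho.symm⟩⟩⟩
  have hsymm : Std.Symm (Relation.ReflTransGen R) := Relation.ReflTransGen.stdSymm
  obtain ⟨haX, hg₁a⟩ := ha
  obtain ⟨hbX, hg₂b⟩ := hb
  have h₁₂ : Relation.ReflTransGen R g₁ g₂ :=
    (hg₁a.tail ⟨haX, hbX, hab⟩).trans (hsymm.symm _ _ hg₂b)
  ext g
  exact ⟨fun ⟨hX, h⟩ => ⟨hX, (hsymm.symm _ _ h₁₂).trans h⟩,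
    fun ⟨hX, h⟩ => ⟨hX, h₁₂.trans h⟩⟩

lemma IsClass.eq_of_mem_posMO {X K₁ K₂ : St F} (h₁ : IsClass X K₁) (h₂ : IsClass X K₂)
    {o : Pos} (ho₁ : o ∈ posMO K₁) (ho₂ : o ∈ posMO K₂) : K₁ = K₂ := by
  obtain ⟨a, ha, hoa⟩ := ho₁
  obtain ⟨b, hb, hob⟩ := ho₂
  exact h₁.eq_of_dirDep h₂ ha hb ⟨o, hoa, hob⟩

lemma eq_of_append_prefix_of_isAntichain {α : Type*} {S : Set (List α)}
    (hS : IsAntichain (· <+: ·) S) {p o₁ o₂ x : List α} (h₁ : o₁ ∈ S) (h₂ : o₂ ∈ S)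
    (hx₁ : p ++ o₁ <+: x) (hx₂ : p ++ o₂ <+: x) : o₁ = o₂ := by
  rcases List.prefix_or_prefix_of_prefix hx₁ hx₂ with h | h
  · exact hS.eq h₁ h₂ ((List.prefix_append_right_inj p).mp h)
  · exact (hS.eq h₂ h₁ ((List.prefix_append_right_inj p).mp h)).symm

def ObligationsExtendAnnouncement (s : St F) : Prop :=
  ∀ g ∈ s, ∀ q ∈ posOf g.1, g.2.2 <+: q

lemma ObligationsExtendAnnouncement.mono {K X : St F} (hX : ObligationsExtendAnnouncement X)
    (h : K ⊆ X) : ObligationsExtendAnnouncement K :=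
  fun g hg => hX g (h hg)

lemma ObligationsExtendAnnouncement.initSt (pats : Set (Tm F)) :
    ObligationsExtendAnnouncement (initSt pats) := by
  rintro _ ⟨ℓ, -, rfl⟩ q -
  exact List.nil_prefix

lemma ObligationsExtendAnnouncement.derivS {pats : Set (Tm F)} {ar : F → ℕ} {s : St F}
    {lab : Pos} {f : F} (hs : ObligationsExtendAnnouncement s) :
    ObligationsExtendAnnouncement (derivS pats ar s lab f) := by
  rintro g hg q ⟨u, hu⟩
  rcases hg with (⟨hgs, -⟩ | ⟨mo, ma, hmem, -, -, rfl⟩) | ⟨ℓ, i, -, -, rfl⟩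
  · exact hs g hgs q ⟨u, hu⟩
  · rcases hu with ⟨hu, -⟩ | ⟨ℓ', _, i, hℓ', _, _, _, hx⟩
    · exact hs _ hmem q ⟨u, hu⟩
    · obtain rfl : q = lab ++ [i] := congrArg Prod.snd hx
      exact (hs _ hmem lab ⟨ℓ', hℓ'⟩).trans (List.prefix_append _ _)
  · obtain rfl : q = lab ++ [i] := congrArg Prod.snd (Set.mem_singleton_iff.mp hu)
    exact List.prefix_rfl

lemma ObligationsExtendAnnouncement.liftSt {K : St F} (hK : ObligationsExtendAnnouncement K)
    (g : Pos) : ObligationsExtendAnnouncement (liftSt g K) := by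
  rintro _ ⟨x, hx, rfl⟩ q ⟨u, y, hy, hyq⟩
  obtain rfl : y.2.drop g.length = q := congrArg Prod.snd hyq
  exact (hK x hx y.2 ⟨y.1, hy⟩).drop g.length

lemma ObligationsExtendAnnouncement.gcp_prefix {K : St F} (hK : ObligationsExtendAnnouncement K)
    {g : Pos} (hg : IsGcp (posMA K) g) {o : Pos} (ho : o ∈ posMO K) : g <+: o := by
  obtain ⟨x, hx, u, hu⟩ := ho
  exact (below_iff_prefix.mp (hg.1 _ ⟨x.1, x.2.1, hx⟩)).trans (hK x hx o ⟨u, hu⟩)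

lemma isAntichain_posMO_initSt (pats : Set (Tm F)) :
    IsAntichain (· <+: ·) (posMO (initSt pats)) := by
  have hnil : posMO (initSt pats) ⊆ {[]} := by
    rintro q ⟨_, ⟨ℓ, -, rfl⟩, u, hu⟩
    exact congrArg Prod.snd (Set.mem_singleton_iff.mp hu)
  exact Set.subsingleton_singleton.isAntichain _ |>.subset hnil

lemma isAntichain_posMO_derivS {pats : Set (Tm F)} {ar : F → ℕ} {s : St F} {lab : Pos}
    {f : F} (hs : IsAntichain (· <+: ·) (posMO s)) (hlab : lab ∈ posMO s) :
    IsAntichain (· <+: ·) (posMO (derivS pats ar s lab f)) := by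
  intro q₁ h₁ q₂ h₂ hne hpre
  rcases mem_posMO_derivS h₁ with ⟨h₁s, h₁lab⟩ | ⟨i, rfl⟩ <;>
    rcases mem_posMO_derivS h₂ with ⟨h₂s, h₂lab⟩ | ⟨j, rfl⟩
  · exact hs h₁s h₂s hne hpre
  · rcases List.prefix_concat_iff.mp hpre with rfl | hq₁
    · exact hne rfl
    · exact h₁lab (hs.eq h₁s hlab hq₁)
  · exact h₂lab (hs.eq hlab h₂s ((List.prefix_append _ _).trans hpre)).symm
  · exact hne (hpre.eq_of_length (by simp))

lemma isAntichain_posMO_liftSt {K : St F} {g : Pos} (hK : IsAntichain (· <+: ·) (posMO K))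
    (hg : ∀ o ∈ posMO K, g <+: o) : IsAntichain (· <+: ·) (posMO (liftSt g K)) := by
  intro r₁ h₁ r₂ h₂ hne hpre
  obtain ⟨o₁, ho₁, rfl⟩ := mem_posMO_liftSt.mp h₁
  obtain ⟨o₂, ho₂, rfl⟩ := mem_posMO_liftSt.mp h₂
  obtain ⟨c₁, rfl⟩ := hg o₁ ho₁
  obtain ⟨c₂, rfl⟩ := hg o₂ ho₂
  simp only [List.drop_left] at hne hpre
  exact hne (List.append_cancel_left (hK.eq ho₁ ho₂ ((List.prefix_append_right_inj g).mpr hpre)))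

lemma RootLabel.label_mem_posMO {pats : Set (Tm F)} {ar : F → ℕ} {L : St F → Pos}
    (hL : RootLabel pats ar L) {s : St F} (hs : Reachable pats ar L s) : L s ∈ posMO s :=
  let ⟨_, _, hmem, hlab⟩ := hL s hs
  ⟨_, hmem, hlab⟩

lemma Reachable.invariants {pats : Set (Tm F)} {ar : F → ℕ} {L : St F → Pos}
    (hL : RootLabel pats ar L) {s : St F} (hs : Reachable pats ar L s) :
    ObligationsExtendAnnouncement s ∧ IsAntichain (· <+: ·) (posMO s) := by
  induction hs with
  | init => exact ⟨.initSt pats, isAntichain_posMO_initSt pats⟩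
  | step s f s' p' hs hδ ih =>
    obtain ⟨K, hK, hg, rfl⟩ := mem_delta_iff.mp hδ
    have hext : ObligationsExtendAnnouncement K := ih.1.derivS.mono hK.subset
    have hanti : IsAntichain (· <+: ·) (posMO K) :=
      (isAntichain_posMO_derivS ih.2 (hL.label_mem_posMO hs)).subset (posMO_mono hK.subset)
    exact ⟨hext.liftSt p', isAntichain_posMO_liftSt hanti fun _ => hext.gcp_prefix hg⟩

lemma Node.reachable {pats : Set (Tm F)} {ar : F → ℕ} {L : St F → Pos} {t : Tm F}
    {s : St F} {p : Pos} (h : Node pats ar L t s p) : Reachable pats ar L s := by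
  induction h with
  | root => exact .init
  | step s _ f s' p' _ _ hδ ih => exact .step s f s' p' ih hδ

lemma exists_mem_posMO_of_mem_work_liftSt {t : Tm F} {K : St F} {g p x : Pos}
    (hK : ∀ o ∈ posMO K, g <+: o) (hx : x ∈ Work t (liftSt g K) (p ++ g)) :
    ∃ o ∈ posMO K, p ++ o <+: x := by
  obtain ⟨q, rfl, -, r, hr, hrq⟩ := hx
  obtain ⟨o, ho, rfl⟩ := mem_posMO_liftSt.mp hr
  obtain ⟨c, rfl⟩ := hK o ho
  refine ⟨g ++ c, ho, ?_⟩
  rw [List.drop_left] at hrq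
  simpa only [List.append_assoc, List.prefix_append_right_inj] using below_iff_prefix.mp hrq

theorem successor_work_disjoint_general {F : Type} (pats : Set (Tm F))
    (ar : F → ℕ) (L : St F → Pos) (t : Tm F) (hL : RootLabel pats ar L) :
    ∀ (s : St F) (p : Pos) (s₁ : St F) (q₁ : Pos) (s₂ : St F) (q₂ : Pos),
      EdgeRel pats ar L t s p s₁ q₁ → EdgeRel pats ar L t s p s₂ q₂ →
      (s₁, q₁) ≠ (s₂, q₂) → Work t s₁ q₁ ∩ Work t s₂ q₂ = ∅ := by
  rintro s p s₁ q₁ s₂ q₂ ⟨hn, f₁, p₁, ⟨v, hv, hf₁⟩, hδ₁, rfl⟩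
    ⟨-, f₂, p₂, ⟨_, hv₂, hf₂⟩, hδ₂, rfl⟩ hne
  obtain rfl := Option.some.inj (hv.symm.trans hv₂)
  obtain rfl : f₁ = f₂ := Option.some.inj (hf₁.symm.trans hf₂)
  obtain ⟨K₁, hK₁, hg₁, rfl⟩ := mem_delta_iff.mp hδ₁
  obtain ⟨K₂, hK₂, hg₂, rfl⟩ := mem_delta_iff.mp hδ₂
  have hs := hn.reachable
  have hext : ObligationsExtendAnnouncement (derivS pats ar s (L s) f₁) :=
    (hs.invariants hL).1.derivS
  have hanti : IsAntichain (· <+: ·) (posMO (derivS pats ar s (L s) f₁)) :=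
    isAntichain_posMO_derivS (hs.invariants hL).2 (hL.label_mem_posMO hs)
  refine Set.eq_empty_iff_forall_notMem.mpr fun x ⟨hx₁, hx₂⟩ => hne ?_
  obtain ⟨o₁, ho₁, hpo₁⟩ := exists_mem_posMO_of_mem_work_liftSt
    (fun _ => (hext.mono hK₁.subset).gcp_prefix hg₁) hx₁
  obtain ⟨o₂, ho₂, hpo₂⟩ := exists_mem_posMO_of_mem_work_liftSt
    (fun _ => (hext.mono hK₂.subset).gcp_prefix hg₂) hx₂
  obtain rfl : o₁ = o₂ := eq_of_append_prefix_of_isAntichain hanti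
    (posMO_mono hK₁.subset ho₁) (posMO_mono hK₂.subset ho₂) hpo₁ hpo₂
  obtain rfl : K₁ = K₂ := hK₁.eq_of_mem_posMO hK₂ ho₁ ho₂
  rw [hg₁.unique hg₂]

/-- In the evaluation tree of a closed term `t`, the work sets of distinct
successors of any node are disjoint. -/
theorem successor_work_disjoint {F : Type} (pats : Set (Tm F))
    (ar : F → ℕ) (L : St F → Pos) (t : Tm F) (hc : Closed t) (hw : WF ar t)
    (hpats : pats.Nonempty) (hWF : ∀ ℓ ∈ pats, WF ar ℓ)
    (hpv : ∀ ℓ ∈ pats, ℓ ≠ Tm.var) (hL : RootLabel pats ar L) :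
    ∀ (s : St F) (p : Pos) (s₁ : St F) (q₁ : Pos) (s₂ : St F) (q₂ : Pos),
      EdgeRel pats ar L t s p s₁ q₁ → EdgeRel pats ar L t s p s₂ q₂ →
      (s₁, q₁) ≠ (s₂, q₂) → Work t s₁ q₁ ∩ Work t s₂ q₂ = ∅ :=
  successor_work_disjoint_general pats ar L t hL
end
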